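/- If y : [0,T) → ℝ is a C¹ nonnegative function satisfying y'(t) ≤ C f(t)(1 + log(1 + y(t))) y(t) for all t ∈ [0,T), where f ∈ L¹(0,T) is nonnegative and C > 0, then y is bounded on [0,T); in particular sup_{t < T} y(t) < ∞. -/
import Mathlib


open MeasureTheory Real

/-- Logarithmic Grönwall lemma: if `y' ≤ C f (1 + log(1+y)) y` on `[0,T)` with `f`
nonnegative and integrable, then `y` is bounded on `[0,T)`. -/
theorem log_gronwall (T C : ℝ) (hT : 0 < T) (hC : 0 < C) (y y' f : ℝ → ℝ)
    (hderiv : ∀ t ∈ Set.Ico (0 : ℝ) T, HasDerivAt y (y' t) t)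
    (hy'cont : ContinuousOn y' (Set.Ico (0 : ℝ) T))
    (hynonneg : ∀ t ∈ Set.Ico (0 : ℝ) T, 0 ≤ y t)
    (hf : ∀ t, 0 ≤ f t) (hfint : IntegrableOn f (Set.Ioo (0 : ℝ) T))
    (hineq : ∀ t ∈ Set.Ico (0 : ℝ) T,
      y' t ≤ C * f t * (1 + Real.log (1 + y t)) * y t) :
    ∃ M : ℝ, ∀ t ∈ Set.Ico (0 : ℝ) T, y t ≤ M := by
  set I := ∫ x in Set.Ioo (0:ℝ) T, f x with hI
  set z : ℝ → ℝ := fun t => Real.log (1 + Real.log (1 + y t)) with hz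
  set g : ℝ → ℝ := fun t => y' t / ((1 + y t) * (1 + Real.log (1 + y t))) with hg
  have hpos : ∀ t ∈ Set.Ico (0:ℝ) T, 0 < 1 + y t ∧ 0 < 1 + Real.log (1 + y t) := by
    intro t ht
    have h1 : 0 ≤ y t := hynonneg t ht
    have h2 : (1:ℝ) ≤ 1 + y t := by linarith
    have h3 : 0 ≤ Real.log (1 + y t) := Real.log_nonneg h2
    exact ⟨by linarith, by linarith⟩
  have hzderiv : ∀ t ∈ Set.Ico (0:ℝ) T, HasDerivAt z (g t) t := by
    intro t ht
    obtain ⟨h1, h2⟩ := hpos t ht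
    have d1 : HasDerivAt (fun s => 1 + y s) (y' t) t := (hderiv t ht).const_add 1
    have d2 : HasDerivAt (fun s => Real.log (1 + y s)) (y' t / (1 + y t)) t :=
      d1.log h1.ne'
    have d3 : HasDerivAt (fun s => 1 + Real.log (1 + y s)) (y' t / (1 + y t)) t :=
      d2.const_add 1
    have d4 := d3.log h2.ne'
    convert d4 using 1
    rw [hg]
    field_simp
  have hgle : ∀ t ∈ Set.Ico (0:ℝ) T, g t ≤ C * f t := by
    intro t ht
    obtain ⟨h1, h2⟩ := hpos t ht
    have hD : 0 < (1 + y t) * (1 + Real.log (1 + y t)) := mul_pos h1 h2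
    rw [hg]
    simp only []
    rw [div_le_iff₀ hD]
    have h5 := hineq t ht
    have hy := hynonneg t ht
    nlinarith [mul_nonneg (mul_nonneg hC.le (hf t)) h2.le]
  have hycont : ContinuousOn y (Set.Ico (0:ℝ) T) := fun t ht =>
    ((hderiv t ht).continuousAt).continuousWithinAt
  have hgcont : ContinuousOn g (Set.Ico (0:ℝ) T) := by
    apply hy'cont.div
    · exact (continuousOn_const.add hycont).mul
        (continuousOn_const.add ((continuousOn_const.add hycont).log
          (fun t ht => (hpos t ht).1.ne')))
    · intro t ht
      exact (mul_pos (hpos t ht).1 (hpos t ht).2).ne'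
  refine ⟨Real.exp (Real.exp (z 0 + C * I) - 1) - 1, ?_⟩
  intro t ht
  obtain ⟨ht0, htT⟩ := ht
  have hsub : Set.Icc (0:ℝ) t ⊆ Set.Ico 0 T := fun s hs => ⟨hs.1, lt_of_le_of_lt hs.2 htT⟩
  have hgint : IntervalIntegrable g volume 0 t := by
    apply ContinuousOn.intervalIntegrable
    rw [Set.uIcc_of_le ht0]
    exact hgcont.mono hsub
  have hftc : ∫ s in (0:ℝ)..t, g s = z t - z 0 := by
    apply intervalIntegral.integral_eq_sub_of_hasDerivAt
    · intro s hs
      rw [Set.uIcc_of_le ht0] at hs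
      exact hzderiv s (hsub hs)
    · exact hgint
  have hIocsub : Set.Ioc (0:ℝ) t ⊆ Set.Ioo 0 T :=
    fun s hs => ⟨hs.1, lt_of_le_of_lt hs.2 htT⟩
  have hfint2 : IntegrableOn f (Set.Ioc (0:ℝ) t) := hfint.mono_set hIocsub
  have hCfint : IntervalIntegrable (fun s => C * f s) volume 0 t := by
    rw [intervalIntegrable_iff_integrableOn_Ioc_of_le ht0]
    exact hfint2.const_mul C
  have hmono : ∫ s in (0:ℝ)..t, g s ≤ ∫ s in (0:ℝ)..t, C * f s := by
    apply intervalIntegral.integral_mono_on ht0 hgint hCfint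
    intro s hs
    exact hgle s (hsub hs)
  have hIle : ∫ s in (0:ℝ)..t, f s ≤ I := by
    rw [intervalIntegral.integral_of_le ht0]
    apply setIntegral_mono_set hfint
    · exact Filter.Eventually.of_forall (fun s => hf s)
    · exact HasSubset.Subset.eventuallyLE hIocsub
  have hzle : z t ≤ z 0 + C * I := by
    have : ∫ s in (0:ℝ)..t, C * f s = C * ∫ s in (0:ℝ)..t, f s := by
      rw [intervalIntegral.integral_const_mul]
    nlinarith [hftc, hmono, hIle]
  -- unfold to conclude
  obtain ⟨h1, h2⟩ := hpos t ⟨ht0, htT⟩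
  have e1 : 1 + Real.log (1 + y t) ≤ Real.exp (z 0 + C * I) := by
    calc 1 + Real.log (1 + y t) = Real.exp (z t) := (Real.exp_log h2).symm
    _ ≤ _ := Real.exp_le_exp.2 hzle
  have e2 : 1 + y t ≤ Real.exp (Real.exp (z 0 + C * I) - 1) := by
    calc 1 + y t = Real.exp (Real.log (1 + y t)) := (Real.exp_log h1).symm
    _ ≤ _ := Real.exp_le_exp.2 (by linarith)
  linarith
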